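/- arXiv:2509.01639 — 3 statements merged into one kernel-verified Lean document; each statement's English description precedes it below -/
import Mathlib

section
/- Let S be a symmetric positive definite n×n real matrix and A an antisymmetric n×n real matrix. Then S + A is invertible, the symmetric part ((S+A)⁻¹)^s of (S+A)⁻¹ is positive definite, and (((S+A)⁻¹)^s)⁻¹ = S − A S⁻¹ A. -/
/-!
Write `M = S + A`, so that `Mˢ = S` and `Mᵀ = S - A`. If `M v = 0` then
`0 = vᵀ M v = vᵀ S v`, so `M` is invertible. The identity
`M⁻¹ + M⁻ᵀ = M⁻¹ (M + Mᵀ) M⁻ᵀ` shows `(M⁻¹)ˢ = M⁻¹ S M⁻ᵀ`, a congruence of `S`, hence positive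
definite, with inverse `Mᵀ S⁻¹ M = (S - A) S⁻¹ (S + A) = S - A S⁻¹ A`.
-/

open Matrix

/-- The symmetric part of a square real matrix: `Mˢ = (M + Mᵀ)/2`. -/
noncomputable def symPart {n : ℕ} (M : Matrix (Fin n) (Fin n) ℝ) : Matrix (Fin n) (Fin n) ℝ :=
  (2:ℝ)⁻¹ • (M + Mᵀ)

section SymPart

variable {n : ℕ}

lemma symPart_add_of_transpose_eq_neg {S A : Matrix (Fin n) (Fin n) ℝ} (hS : Sᵀ = S)
    (hA : Aᵀ = -A) : symPart (S + A) = S := by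
  rw [symPart, transpose_add, hS, hA, add_add_add_comm, add_neg_cancel, add_zero, ← two_smul ℝ S,
    smul_smul, inv_mul_cancel₀ two_ne_zero, one_smul]

lemma dotProduct_symPart_mulVec (M : Matrix (Fin n) (Fin n) ℝ) (v : Fin n → ℝ) :
    v ⬝ᵥ symPart M *ᵥ v = v ⬝ᵥ M *ᵥ v := by
  rw [symPart, smul_mulVec, dotProduct_smul, add_mulVec, dotProduct_add,
    dotProduct_transpose_mulVec, ← two_smul ℝ (v ⬝ᵥ M *ᵥ v), smul_smul,
    inv_mul_cancel₀ two_ne_zero, one_smul]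

lemma isUnit_of_posDef_symPart {M : Matrix (Fin n) (Fin n) ℝ} (hM : (symPart M).PosDef) :
    IsUnit M := by
  rw [isUnit_iff_isUnit_det, isUnit_iff_ne_zero]
  intro hdet
  obtain ⟨v, hv0, hv⟩ := exists_mulVec_eq_zero_iff.mpr hdet
  have hpos := hM.dotProduct_mulVec_pos hv0
  rw [star_trivial, dotProduct_symPart_mulVec, hv, dotProduct_zero] at hpos
  exact hpos.false

/-- Also valid for singular `M`, where `M⁻¹ = 0` by convention. -/
lemma symPart_nonsing_inv (M : Matrix (Fin n) (Fin n) ℝ) :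
    symPart M⁻¹ = M⁻¹ * symPart M * M⁻¹ᵀ := by
  by_cases hM : IsUnit M.det
  · have hMT : IsUnit Mᵀ.det := by rwa [det_transpose]
    rw [symPart, symPart, mul_smul_comm, smul_mul_assoc, mul_add, add_mul, nonsing_inv_mul _ hM,
      one_mul, transpose_nonsing_inv, Matrix.mul_assoc, mul_nonsing_inv _ hMT, mul_one, add_comm]
  · rw [nonsing_inv_apply_not_isUnit _ hM, symPart, transpose_zero, zero_mul, zero_mul, add_zero,
      smul_zero]

lemma Matrix.PosDef.symPart_nonsing_inv {M : Matrix (Fin n) (Fin n) ℝ} (hM : (symPart M).PosDef) :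
    (symPart M⁻¹).PosDef := by
  have hinv : IsUnit M⁻¹ := isUnit_nonsing_inv_iff.mpr (isUnit_of_posDef_symPart hM)
  rw [_root_.symPart_nonsing_inv, ← conjTranspose_eq_transpose_of_trivial, ← star_eq_conjTranspose]
  exact (IsUnit.posDef_star_right_conjugate_iff hinv).mpr hM

lemma nonsing_inv_symPart_nonsing_inv {M : Matrix (Fin n) (Fin n) ℝ} (hM : IsUnit M) :
    (symPart M⁻¹)⁻¹ = Mᵀ * (symPart M)⁻¹ * M := by
  have hdet : IsUnit M.det := (isUnit_iff_isUnit_det M).mp hM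
  rw [_root_.symPart_nonsing_inv, Matrix.mul_inv_rev, Matrix.mul_inv_rev, transpose_nonsing_inv,
    nonsing_inv_nonsing_inv _ (by rwa [det_transpose]), nonsing_inv_nonsing_inv _ hdet,
    Matrix.mul_assoc]

end SymPart

lemma sub_mul_nonsing_inv_mul_add {m R : Type*} [Fintype m] [DecidableEq m] [CommRing R]
    {S : Matrix m m R} (hS : IsUnit S) (A : Matrix m m R) :
    (S - A) * S⁻¹ * (S + A) = S - A * S⁻¹ * A := by
  have hdet : IsUnit S.det := (isUnit_iff_isUnit_det S).mp hS
  simp only [sub_mul, mul_add, mul_nonsing_inv _ hdet, one_mul, Matrix.mul_assoc,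
    nonsing_inv_mul _ hdet, mul_one]
  abel

/-- Let `S` be a symmetric positive definite real matrix and `A` antisymmetric.  Then `S + A`
is invertible, the symmetric part of `(S + A)⁻¹` is positive definite, and
`(((S+A)⁻¹)ˢ)⁻¹ = S − A S⁻¹ A`. -/
theorem stmt3 {n : ℕ} (S A : Matrix (Fin n) (Fin n) ℝ)
    (hS : S.PosDef) (hA : Aᵀ = -A) :
    IsUnit (S + A) ∧
    (symPart (S + A)⁻¹).PosDef ∧
    (symPart (S + A)⁻¹)⁻¹ = S - A * S⁻¹ * A := by
  have hST : Sᵀ = S := (isHermitian_iff_isSymm.mp hS.isHermitian).eq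
  have hsym : symPart (S + A) = S := symPart_add_of_transpose_eq_neg hST hA
  have hpos : (symPart (S + A)).PosDef := by rwa [hsym]
  have hunit : IsUnit (S + A) := isUnit_of_posDef_symPart hpos
  refine ⟨hunit, hpos.symPart_nonsing_inv, ?_⟩
  rw [nonsing_inv_symPart_nonsing_inv hunit, hsym, transpose_add, hST, hA, ← sub_eq_add_neg,
    sub_mul_nonsing_inv_mul_add hS.isUnit]
end

section
/- Let S be a symmetric positive definite n×n real matrix and A an antisymmetric n×n real matrix. Then det(S + A) ≥ det(S) > 0; in particular det(Id + S⁻¹ A) ≥ 1 and S + A is invertible. -/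
open Matrix

/-! If `Bᵀ = -B` then `xᵀ B x = 0`, so `S + t B` is invertible for every real `t` when `S` is
positive definite, and `det (S + B) > 0` by continuity in `t`. Moreover
`(1 + B)ᵀ (1 + B) = 1 + BᵀB ≥ 1`, so `det (1 + B)² ≥ 1` and hence `det (1 + B) ≥ 1`. Writing
`S⁻¹ = RᵀR`, Sylvester's identity gives `det (1 + S⁻¹A) = det (1 + R A Rᵀ)` with `R A Rᵀ`
antisymmetric, and `det (S + A) = det S · det (1 + S⁻¹A)`. -/

namespace Matrix

variable {n : Type*} [Fintype n]

theorem dotProduct_mulVec_self_eq_zero_of_transpose_eq_neg {A : Matrix n n ℝ} (hA : Aᵀ = -A)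
    (x : n → ℝ) : x ⬝ᵥ A *ᵥ x = 0 := by
  have h : x ⬝ᵥ A *ᵥ x = -(x ⬝ᵥ A *ᵥ x) :=
    calc x ⬝ᵥ A *ᵥ x = Aᵀ *ᵥ x ⬝ᵥ x := by rw [mulVec_transpose, dotProduct_mulVec]
      _ = -(x ⬝ᵥ A *ᵥ x) := by rw [hA, neg_mulVec, neg_dotProduct, dotProduct_comm]
  linarith

variable [DecidableEq n]

theorem PosSemidef.one_le_det_one_add {Q : Matrix n n ℝ} (hQ : Q.PosSemidef) :
    1 ≤ (1 + Q).det := by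
  rw [hQ.1.spectral_theorem, ← map_one (Unitary.conjStarAlgAut ℝ _ hQ.1.eigenvectorUnitary),
    ← map_add, det_map, ← diagonal_one, diagonal_add, det_diagonal]
  exact Finset.one_le_prod fun i _ => by simpa using hQ.eigenvalues_nonneg i

namespace PosDef

variable {S A : Matrix n n ℝ}

theorem det_add_ne_zero_of_transpose_eq_neg (hS : S.PosDef) (hA : Aᵀ = -A) :
    (S + A).det ≠ 0 := by
  intro h
  obtain ⟨x, hx, hSAx⟩ := exists_mulVec_eq_zero_iff.2 h
  have hpos : 0 < x ⬝ᵥ S *ᵥ x := by simpa using hS.dotProduct_mulVec_pos hx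
  have hzero : x ⬝ᵥ (S + A) *ᵥ x = x ⬝ᵥ S *ᵥ x := by
    rw [add_mulVec, dotProduct_add, dotProduct_mulVec_self_eq_zero_of_transpose_eq_neg hA, add_zero]
  rw [hSAx, dotProduct_zero] at hzero
  exact hpos.ne hzero

theorem det_add_pos_of_transpose_eq_neg (hS : S.PosDef) (hA : Aᵀ = -A) :
    0 < (S + A).det := by
  set f : ℝ → ℝ := fun t => (S + t • A).det
  have hf_cont : Continuous f :=
    (continuous_const.add (continuous_id.smul continuous_const)).matrix_det
  have hf_ne : ∀ t, f t ≠ 0 := fun t =>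
    hS.det_add_ne_zero_of_transpose_eq_neg (by rw [transpose_smul, hA, smul_neg])
  by_contra! h
  obtain ⟨t, -, ht⟩ := intermediate_value_Icc' zero_le_one hf_cont.continuousOn
    (show (0 : ℝ) ∈ Set.Icc (f 1) (f 0) from
      ⟨by simpa [f] using h, by simpa [f] using hS.det_pos.le⟩)
  exact hf_ne t ht

end PosDef

theorem one_le_det_one_add_of_transpose_eq_neg {B : Matrix n n ℝ} (hB : Bᵀ = -B) :
    1 ≤ (1 + B).det := by
  have hpos : 0 < (1 + B).det := PosDef.one.det_add_pos_of_transpose_eq_neg hB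
  have hsq : (1 + B).det ^ 2 = (1 + Bᵀ * B).det := by
    have : (1 + B)ᵀ * (1 + B) = 1 + Bᵀ * B := by
      rw [transpose_add, transpose_one, hB]; noncomm_ring
    rw [sq, ← this, det_mul, det_transpose]
  have hge : 1 ≤ (1 + Bᵀ * B).det :=
    PosSemidef.one_le_det_one_add (by simpa using posSemidef_conjTranspose_mul_self B)
  nlinarith

open scoped MatrixOrder in
theorem PosSemidef.one_le_det_one_add_mul_of_transpose_eq_neg {P A : Matrix n n ℝ}
    (hP : P.PosSemidef) (hA : Aᵀ = -A) : 1 ≤ (1 + P * A).det := by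
  obtain ⟨R, rfl⟩ := CStarAlgebra.nonneg_iff_eq_star_mul_self.mp hP.nonneg
  rw [mul_assoc, det_one_add_mul_comm, mul_assoc]
  refine one_le_det_one_add_of_transpose_eq_neg ?_
  simp [star_eq_conjTranspose, conjTranspose_eq_transpose_of_trivial, transpose_mul, hA,
    mul_assoc]

theorem PosDef.det_le_det_add_of_transpose_eq_neg {S A : Matrix n n ℝ} (hS : S.PosDef)
    (hA : Aᵀ = -A) : S.det ≤ (S + A).det := by
  have hfactor : S + A = S * (1 + S⁻¹ * A) := by
    rw [mul_add, mul_one, mul_nonsing_inv_cancel_left _ _ hS.det_pos.ne'.isUnit]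
  rw [hfactor, det_mul]
  exact le_mul_of_one_le_right hS.det_pos.le
    (hS.inv.posSemidef.one_le_det_one_add_mul_of_transpose_eq_neg hA)

end Matrix

/-- For `S` symmetric positive definite and `A` antisymmetric:
`det (S + A) ≥ det S > 0`, `det (Id + S⁻¹ A) ≥ 1`, and `S + A` is invertible. -/
theorem stmt6 {n : ℕ} (S A : Matrix (Fin n) (Fin n) ℝ)
    (hS : S.PosDef) (hA : Aᵀ = -A) :
    S.det ≤ (S + A).det ∧ 0 < S.det ∧ 1 ≤ (1 + S⁻¹ * A).det ∧ IsUnit (S + A) :=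
  ⟨hS.det_le_det_add_of_transpose_eq_neg hA, hS.det_pos,
    hS.inv.posSemidef.one_le_det_one_add_mul_of_transpose_eq_neg hA,
    (isUnit_iff_isUnit_det _).2 (hS.det_add_pos_of_transpose_eq_neg hA).ne'.isUnit⟩
end

section
/- Let Ψ be an invertible n×n real matrix. Then Ψ^s · (Ψ⁻¹)^s · Ψ^s = Ψ^s + Ψ^a · (Ψ⁻¹)^s · Ψ^a, where Ψ^s, Ψ^a are the symmetric and antisymmetric parts of Ψ and (Ψ⁻¹)^s is the symmetric part of Ψ⁻¹. -/
open Matrix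

/-- The antisymmetric part of a square real matrix: `Mᵃ = (M - Mᵀ)/2`. -/
noncomputable def skewPart {n : ℕ} (M : Matrix (Fin n) (Fin n) ℝ) : Matrix (Fin n) (Fin n) ℝ :=
  (2:ℝ)⁻¹ • (M - Mᵀ)

/-!
Write `Q = (Ψ⁻¹)ˢ`. Since `Ψ Ψ⁻¹ Ψᵀ = Ψᵀ` and `Ψ Ψ⁻ᵀ Ψᵀ = Ψ`, both `Ψ Q Ψᵀ` and `Ψᵀ Q Ψ` equal `Ψˢ`.
On the other hand, with `Ψˢ = (Ψ + Ψᵀ)/2` and `Ψᵃ = (Ψ - Ψᵀ)/2`, the polarization identity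
`Ψˢ Q Ψˢ - Ψᵃ Q Ψᵃ = (Ψ Q Ψᵀ + Ψᵀ Q Ψ)/2` holds in any algebra, and its right-hand side is `Ψˢ`.
-/

theorem half_add_mul_mul_half_add_sub_half_sub_mul_mul_half_sub
    {K A : Type*} [Field K] [CharZero K] [Ring A] [Algebra K A] (x y q : A) :
    ((2:K)⁻¹ • (x + y)) * q * ((2:K)⁻¹ • (x + y)) - ((2:K)⁻¹ • (x - y)) * q * ((2:K)⁻¹ • (x - y)) =
      (2:K)⁻¹ • (x * q * y + y * q * x) := by
  simp only [smul_mul_assoc, mul_smul_comm, add_mul, mul_add, sub_mul, mul_sub]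
  module

theorem symPart_transpose {n : ℕ} (M : Matrix (Fin n) (Fin n) ℝ) : symPart Mᵀ = symPart M := by
  rw [symPart, symPart, transpose_transpose, add_comm]

theorem mul_symPart_inv_mul_transpose {n : ℕ} {M : Matrix (Fin n) (Fin n) ℝ} (hM : IsUnit M) :
    M * symPart M⁻¹ * Mᵀ = symPart M := by
  have hdet : IsUnit M.det := (isUnit_iff_isUnit_det M).mp hM
  have h₁ : M * M⁻¹ * Mᵀ = Mᵀ := by rw [mul_nonsing_inv M hdet, one_mul]
  have h₂ : M * M⁻¹ᵀ * Mᵀ = M := by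
    rw [mul_assoc, ← transpose_mul, mul_nonsing_inv M hdet, transpose_one, mul_one]
  rw [symPart, symPart, mul_smul_comm, smul_mul_assoc, mul_add, add_mul, h₁, h₂, add_comm]

theorem transpose_mul_symPart_inv_mul {n : ℕ} {M : Matrix (Fin n) (Fin n) ℝ} (hM : IsUnit M) :
    Mᵀ * symPart M⁻¹ * M = symPart M := by
  have h := mul_symPart_inv_mul_transpose ((isUnit_transpose M).mpr hM)
  rwa [← transpose_nonsing_inv, symPart_transpose, symPart_transpose, transpose_transpose] at h

/-- For an invertible real matrix `Ψ`:
`Ψˢ · (Ψ⁻¹)ˢ · Ψˢ = Ψˢ + Ψᵃ · (Ψ⁻¹)ˢ · Ψᵃ`. -/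
theorem stmt9 {n : ℕ} (Ψ : Matrix (Fin n) (Fin n) ℝ) (hΨ : IsUnit Ψ) :
    symPart Ψ * symPart Ψ⁻¹ * symPart Ψ =
      symPart Ψ + skewPart Ψ * symPart Ψ⁻¹ * skewPart Ψ := by
  rw [← sub_eq_iff_eq_add]
  calc symPart Ψ * symPart Ψ⁻¹ * symPart Ψ - skewPart Ψ * symPart Ψ⁻¹ * skewPart Ψ
      = (2:ℝ)⁻¹ • (Ψ * symPart Ψ⁻¹ * Ψᵀ + Ψᵀ * symPart Ψ⁻¹ * Ψ) :=
        half_add_mul_mul_half_add_sub_half_sub_mul_mul_half_sub _ _ _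
    _ = (2:ℝ)⁻¹ • (symPart Ψ + symPart Ψ) := by
        rw [mul_symPart_inv_mul_transpose hΨ, transpose_mul_symPart_inv_mul hΨ]
    _ = symPart Ψ := by module
end
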